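/- arXiv:math/0610586 — 3 statements merged into one kernel-verified Lean document; each statement's English description precedes it below -/
import Mathlib

section
/- Let σ be a permutation of a set of 2E elements with V disjoint cycles (counting fixed points), let τ be a fixed-point-free involution on the same set, and let F be the number of cycles of σ∘τ. Then V − E + F is even. -/
open Equiv Finset

/-- Number of cycles of a permutation, counting fixed points as 1-cycles. -/
def cycleCount {α : Type*} [Fintype α] [DecidableEq α] (σ : Equiv.Perm α) : ℕ :=
  σ.cycleType.card + (Fintype.card α - σ.support.card)

/-- A fixed-point-free involution (a product of disjoint 2-cycles covering all points). -/
def IsFpfInvolution {α : Type*} (τ : Equiv.Perm α) : Prop :=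
  τ * τ = 1 ∧ ∀ x, τ x ≠ x

/-- The subgroup generated by σ and τ acts transitively. -/
def IsTransitivePair {α : Type*} (σ τ : Equiv.Perm α) : Prop :=
  ∀ x y : α, ∃ g ∈ Subgroup.closure ({σ, τ} : Set (Equiv.Perm α)), g x = y

theorem euler_char_even (E : ℕ) (σ τ : Equiv.Perm (Fin (2 * E)))
    (hτ : IsFpfInvolution τ) :
    Even ((cycleCount σ : ℤ) - E + cycleCount (σ * τ)) := by
  obtain ⟨hinv, hfpf⟩ := hτ
  have hsupp : τ.support = Finset.univ := by
    ext x; simp [Equiv.Perm.mem_support, hfpf x]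
  have hsum : τ.cycleType.sum = 2 * E := by
    rw [Equiv.Perm.sum_cycleType, hsupp, Finset.card_univ, Fintype.card_fin]
  have hord : orderOf τ ∣ 2 := orderOf_dvd_of_pow_eq_one (by rwa [pow_two])
  have hcyc : ∀ n ∈ τ.cycleType, n = 2 := by
    intro n hn
    have h2 : 2 ≤ n := Equiv.Perm.two_le_of_mem_cycleType hn
    have hd : n ∣ 2 := (Multiset.dvd_lcm hn).trans (Equiv.Perm.lcm_cycleType τ ▸ hord)
    exact le_antisymm (Nat.le_of_dvd (by norm_num) hd) h2
  have hrep : τ.cycleType = Multiset.replicate (Multiset.card τ.cycleType) 2 :=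
    Multiset.eq_replicate_card.mpr hcyc
  have hcard : Multiset.card τ.cycleType = E := by
    have := hsum
    rw [hrep, Multiset.sum_replicate, smul_eq_mul] at this
    omega
  -- sign computation
  have hsign : Equiv.Perm.sign (σ * τ) = Equiv.Perm.sign σ * Equiv.Perm.sign τ :=
    map_mul _ _ _
  rw [Equiv.Perm.sign_of_cycleType, Equiv.Perm.sign_of_cycleType, Equiv.Perm.sign_of_cycleType,
    hsum, hcard] at hsign
  set s1 := σ.cycleType.sum with hs1
  set c1 := Multiset.card σ.cycleType with hc1
  set s2 := (σ * τ).cycleType.sum with hs2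
  set c2 := Multiset.card (σ * τ).cycleType with hc2
  have hsign' : ((-1 : ℤ)) ^ (s2 + c2) = (-1) ^ (s1 + c1) * (-1) ^ (2 * E + E) := by
    have := congrArg (Units.val) hsign
    push_cast at this
    simpa using this
  have hpar : (s2 + c2) % 2 = (s1 + c1 + E) % 2 := by
    have h1 := neg_one_pow_eq_one_iff_even (R := ℤ) (n := s2 + c2 + (s1 + c1 + E)) (by norm_num)
    have : ((-1 : ℤ)) ^ (s2 + c2 + (s1 + c1 + E)) = 1 := by
      rw [pow_add, hsign', ← pow_add, ← pow_add]
      rw [show s1 + c1 + (2 * E + E) + (s1 + c1 + E) = 2 * (s1 + c1 + 2 * E) by ring,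
        pow_mul]
      norm_num
    have he := h1.mp this
    rcases he with ⟨k, hk⟩
    omega
  -- cardinalities
  have hle1 : s1 ≤ 2 * E := by
    rw [hs1, Equiv.Perm.sum_cycleType]
    simpa using (Finset.card_le_univ σ.support)
  have hle2 : s2 ≤ 2 * E := by
    rw [hs2, Equiv.Perm.sum_cycleType]
    simpa using (Finset.card_le_univ (σ * τ).support)
  have e1 : cycleCount σ = c1 + (2 * E - s1) := by
    simp [cycleCount, hs1, hc1, Equiv.Perm.sum_cycleType]
  have e2 : cycleCount (σ * τ) = c2 + (2 * E - s2) := by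
    simp [cycleCount, hs2, hc2, Equiv.Perm.sum_cycleType]
  rw [e1, e2, Int.even_iff]
  push_cast [hle1, hle2]
  omega
end

section
/- Let σ be a permutation of a set Ω of 2E elements with V cycles, and let τ be a fixed-point-free involution on Ω such that the subgroup ⟨σ, τ⟩ acts transitively on Ω. If F is the number of cycles of σ∘τ, then V − E + F ≤ 2. -/
open Equiv Finset

/-
For permutations `f`, `g` of an `n`-set write `c` for the number of cycles and `k` for the
number of orbits of `⟨f, g⟩`; we show `c f + c g + c (f g) ≤ n + 2 k`. This is clear for `g = 1`.
Otherwise `g = s g₀` with `s = (a b)`, `b = g a`, splitting a cycle of `g`, and `(f s, g₀)` has the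
same product. Multiplying by a transposition `(a b)` changes `c` by at most one, and merges the
cycles of `a` and `b` when they differ. Since `⟨f, g, s⟩ = ⟨f s, g₀, s⟩`, the orbit count of
`(f s, g₀)` exceeds that of `(f, g)` by at most one, and only if `a`, `b` lie in different orbits of
`⟨f s, g₀⟩`, in which case `c f < c (f s)`. Either way the inequality passes from `(f s, g₀)` to
`(f, g)`. For the map, `c τ = E`, `k = 1` and `n = 2 E`.
-/

namespace Setoid

variable {α : Type*}

theorem map_of_le_surjective {r t : Setoid α} (h : r ≤ t) : Function.Surjective (map_of_le h) :=
  Quotient.map_surjective _ Function.surjective_id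

variable [Finite α]

theorem card_quotient_le_of_le {r t : Setoid α} (h : r ≤ t) :
    Nat.card (Quotient t) ≤ Nat.card (Quotient r) :=
  Nat.card_le_card_of_surjective _ (map_of_le_surjective h)

theorem card_quotient_lt_of_le {r t : Setoid α} (h : r ≤ t) {a b : α}
    (hr : ¬ r a b) (ht : t a b) : Nat.card (Quotient t) < Nat.card (Quotient r) := by
  have := Fintype.ofFinite (Quotient r)
  have := Fintype.ofFinite (Quotient t)
  simp only [Nat.card_eq_fintype_card]
  refine Fintype.card_lt_of_surjective_not_injective _ (map_of_le_surjective h) fun hinj => hr ?_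
  exact Quotient.exact (@hinj ⟦a⟧ ⟦b⟧ (Quotient.sound ht))

theorem card_quotient_le_add_one_of_le {r t : Setoid α} (h : r ≤ t) (a : α)
    (ht : ∀ x y, t x y → ¬ r x a → ¬ r y a → r x y) :
    Nat.card (Quotient r) ≤ Nat.card (Quotient t) + 1 := by
  have hinj : Set.InjOn (map_of_le h) {⟦a⟧}ᶜ := by
    rintro ⟨x⟩ hx ⟨y⟩ hy hxy
    exact Quotient.sound <| ht x y (Quotient.exact hxy) (fun h => hx (Quotient.sound h))
      (fun h => hy (Quotient.sound h))
  have := Set.ncard_le_ncard_of_injOn _ (fun _ _ => Set.mem_univ _) hinj Set.finite_univ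
  rw [← Set.ncard_univ, ← Set.ncard_sdiff_singleton_add_one (Set.mem_univ ⟦a⟧),
    ← Set.compl_eq_univ_sdiff, ← Set.ncard_univ]
  omega

end Setoid

namespace Equiv.Perm

section

variable {α : Type*}

theorem sameCycle_setoid_le_iff {f : Perm α} {r : Setoid α} :
    SameCycle.setoid f ≤ r ↔ ∀ x, r (f x) x := by
  refine ⟨fun h x => r.symm' (h ⟨1, rfl⟩), fun h => ?_⟩
  rintro x _ ⟨i, rfl⟩
  refine r.symm' ?_
  induction i using Int.induction_on with
  | zero => exact r.refl' x
  | succ i ih => rw [add_comm, zpow_one_add, mul_apply]; exact r.trans' (h _) ih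
  | pred i ih =>
    have hy : f ((f ^ (-(i : ℤ) - 1)) x) = (f ^ (-(i : ℤ))) x := by
      rw [← mul_apply, ← zpow_one_add, add_sub_cancel]
    exact r.trans' (r.symm' (hy ▸ h _)) ih

theorem sameCycle_setoid_mul_le (f g : Perm α) :
    SameCycle.setoid (f * g) ≤ SameCycle.setoid f ⊔ SameCycle.setoid g := by
  refine sameCycle_setoid_le_iff.2 fun x => ?_
  have hf : (SameCycle.setoid f ⊔ SameCycle.setoid g) (f (g x)) (g x) :=
    le_sup_left (a := SameCycle.setoid f) (sameCycle_apply_left.2 (SameCycle.refl f _))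
  have hg : (SameCycle.setoid f ⊔ SameCycle.setoid g) (g x) x :=
    le_sup_right (a := SameCycle.setoid f) (sameCycle_apply_left.2 (SameCycle.refl g _))
  exact Setoid.trans' _ hf hg

/-- The number of orbits of `⟨f, g⟩`. -/
noncomputable def pairOrbitCount (f g : Perm α) : ℕ :=
  Nat.card (Quotient (SameCycle.setoid f ⊔ SameCycle.setoid g))

theorem pairOrbitCount_le_one {f g : Perm α} (h : IsTransitivePair f g) :
    pairOrbitCount f g ≤ 1 := by
  set R := SameCycle.setoid f ⊔ SameCycle.setoid g
  have hclosure : ∀ u ∈ Subgroup.closure {f, g}, SameCycle.setoid u ≤ R := by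
    intro u hu
    induction hu using Subgroup.closure_induction with
    | mem u hu =>
      rcases hu with rfl | rfl
      exacts [le_sup_left, le_sup_right]
    | one => exact sameCycle_setoid_le_iff.2 fun x => R.refl' x
    | mul u v _ _ hu hv => exact (sameCycle_setoid_mul_le u v).trans (sup_le hu hv)
    | inv u _ hu => exact fun x y hxy => hu (sameCycle_inv.1 hxy)
  have htop : R = ⊤ := Setoid.eq_top_iff.2 fun x y => by
    obtain ⟨u, hu, rfl⟩ := h x y
    exact hclosure u hu (sameCycle_apply_right.2 (SameCycle.refl u x))
  have := Quotient.subsingleton_iff.2 htop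
  exact Finite.card_le_one_iff_subsingleton.2 this

variable [DecidableEq α]

theorem sameCycle_setoid_swap_le_iff {r : Setoid α} {a b : α} :
    SameCycle.setoid (swap a b) ≤ r ↔ r a b := by
  refine sameCycle_setoid_le_iff.trans ⟨fun h => by simpa using r.symm' (h a), fun h x => ?_⟩
  rcases eq_or_ne x a with rfl | hxa
  · simpa using r.symm' h
  rcases eq_or_ne x b with rfl | hxb
  · simpa using h
  · rw [swap_apply_of_ne_of_ne hxa hxb]

theorem sameCycle_mul_swap_of_not_sameCycle [Finite α] {f : Perm α} {a b : α}
    (h : ¬ f.SameCycle a b) : (f * swap a b).SameCycle a b := by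
  by_contra hab
  -- The `f * swap a b`-orbit of `a` runs along the `f`-cycle of `b` from `f b` on.
  have key : ∀ n : ℕ, (f * swap a b).SameCycle a ((f ^ n) (f b)) := by
    intro n
    induction n with
    | zero => exact ⟨1, by simp⟩
    | succ n ih =>
      have hyb : (f ^ n) (f b) ≠ b := fun hy => hab (by rwa [hy] at ih)
      have hy : f.SameCycle ((f ^ n) (f b)) b :=
        sameCycle_pow_left.2 (sameCycle_apply_left.2 (SameCycle.refl f b))
      have hya : (f ^ n) (f b) ≠ a := fun hya => h (by rwa [hya] at hy)
      have hstep : (f * swap a b) ((f ^ n) (f b)) = (f ^ (n + 1)) (f b) := by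
        rw [mul_apply, swap_apply_of_ne_of_ne hya hyb, pow_succ', mul_apply]
      exact hstep ▸ sameCycle_apply_right.2 ih
  obtain ⟨n, -, hn⟩ := (sameCycle_apply_left.2 (SameCycle.refl f b)).exists_pow_eq'
  exact hab (by simpa [hn] using key n)

theorem sameCycle_swap_mul_of_not_sameCycle [Finite α] {f : Perm α} {a b : α}
    (h : ¬ f.SameCycle a b) : (swap a b * f).SameCycle a b := by
  simpa [mul_inv_rev] using (sameCycle_mul_swap_of_not_sameCycle (f := f⁻¹) (by simpa using h)).inv

end

variable {α : Type*} [Fintype α] [DecidableEq α]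

theorem cycleCount_eq_card_quotient (f : Perm α) :
    cycleCount f = Nat.card (Quotient (SameCycle.setoid f)) := by
  let toCycle : α → f.cycleFactorsFinset ⊕ Function.fixedPoints f := fun x =>
    if hx : f x = x then .inr ⟨x, hx⟩
    else .inl ⟨f.cycleOf x, cycleOf_mem_cycleFactorsFinset_iff.2 (mem_support.2 hx)⟩
  have hwd : ∀ x y, f.SameCycle x y → toCycle x = toCycle y := by
    intro x y hxy
    by_cases hx : f x = x
    · obtain rfl := hxy.eq_of_left hx; rfl
    · have hy : f y ≠ y := mt hxy.apply_eq_self_iff.2 hx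
      simp only [toCycle, dif_neg hx, dif_neg hy, hxy.cycleOf_eq]
  let Ψ := Quotient.lift (s := SameCycle.setoid f) toCycle hwd
  have hΨ : Function.Bijective Ψ := by
    constructor
    · rintro ⟨x⟩ ⟨y⟩ hxy
      change toCycle x = toCycle y at hxy
      refine Quotient.sound ?_
      by_cases hx : f x = x <;> by_cases hy : f y = y <;>
        simp only [toCycle, hx, hy, dif_pos, dif_neg, not_false_eq_true, Sum.inl.injEq,
          Sum.inr.injEq, Subtype.mk.injEq, reduceCtorEq] at hxy
      · exact Subtype.mk.inj hxy ▸ SameCycle.refl f x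
      · exact (sameCycle_iff_cycleOf_eq_of_mem_support (mem_support.2 hx) (mem_support.2 hy)).2 hxy
    · rintro (⟨c, hc⟩ | ⟨x, hx⟩)
      · obtain ⟨x, hx⟩ := (mem_cycleFactorsFinset_iff.1 hc).1.nonempty_support
        have hfx : f x ≠ x := mem_support.1 (mem_cycleFactorsFinset_support_le hc hx)
        refine ⟨⟦x⟧, (dif_neg hfx).trans ?_⟩
        simp only [cycle_is_cycleOf hx hc]
      · exact ⟨⟦x⟧, dif_pos hx⟩
  rw [Nat.card_eq_of_bijective Ψ hΨ, Nat.card_sum, Nat.card_eq_fintype_card,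
    Nat.card_eq_fintype_card, card_fixedPoints, sum_cycleType, Fintype.card_coe, cycleCount,
    cycleType_def, Multiset.card_map]
  rfl

theorem card_le_two_mul_cycleCount {τ : Perm α} (hτ : τ * τ = 1) :
    Fintype.card α ≤ 2 * cycleCount τ := by
  have hsupp : #τ.support = 2 * Multiset.card τ.cycleType := by
    rw [← sum_cycleType, cycleType_of_pow_prime_eq_one (p := 2) (by rwa [sq])]
    simp [mul_comm]
  have := τ.support.card_le_univ
  unfold cycleCount
  omega

theorem card_quotient_le_card_quotient_sup_swap_add_one (r : Setoid α) (a b : α) :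
    Nat.card (Quotient r) ≤ Nat.card (Quotient (r ⊔ SameCycle.setoid (swap a b))) + 1 := by
  classical
  refine Setoid.card_quotient_le_add_one_of_le le_sup_left a fun x y hxy hx hy => ?_
  -- `r ⊔ SameCycle.setoid (swap a b)` lies below the kernel of "send the class of `a` to `b`".
  let φ : α → Quotient r := fun z => if r z a then ⟦b⟧ else ⟦z⟧
  have hle : r ⊔ SameCycle.setoid (swap a b) ≤ Setoid.ker φ := by
    refine sup_le (fun z w hzw => ?_) (sameCycle_setoid_swap_le_iff.2 ?_)
    · have hza : r z a ↔ r w a := ⟨r.trans' (r.symm' hzw), r.trans' hzw⟩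
      simp only [Setoid.ker_def, φ, hza, Quotient.sound hzw]
    · simp [Setoid.ker_def, φ]
  simpa [φ, hx, hy, Quotient.eq] using hle hxy

theorem cycleCount_le_cycleCount_mul_swap_add_one (f : Perm α) (a b : α) :
    cycleCount f ≤ cycleCount (f * swap a b) + 1 := by
  rw [cycleCount_eq_card_quotient, cycleCount_eq_card_quotient]
  exact (card_quotient_le_card_quotient_sup_swap_add_one _ a b).trans
    (Nat.add_le_add_right (Setoid.card_quotient_le_of_le (sameCycle_setoid_mul_le _ _)) 1)

theorem cycleCount_mul_swap_lt {f : Perm α} {a b : α} (h : ¬ f.SameCycle a b) :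
    cycleCount (f * swap a b) < cycleCount f := by
  have hab := sameCycle_mul_swap_of_not_sameCycle h
  have hle : SameCycle.setoid f ≤ SameCycle.setoid (f * swap a b) := by
    simpa using (sameCycle_setoid_mul_le (f * swap a b) (swap a b)).trans
      (sup_le le_rfl (sameCycle_setoid_swap_le_iff.2 hab))
  rw [cycleCount_eq_card_quotient, cycleCount_eq_card_quotient]
  exact Setoid.card_quotient_lt_of_le hle h hab

theorem cycleCount_swap_mul_lt {f : Perm α} {a b : α} (h : ¬ f.SameCycle a b) :
    cycleCount (swap a b * f) < cycleCount f := by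
  have hab := sameCycle_swap_mul_of_not_sameCycle h
  have hle : SameCycle.setoid f ≤ SameCycle.setoid (swap a b * f) := by
    simpa using (sameCycle_setoid_mul_le (swap a b) (swap a b * f)).trans
      (sup_le (sameCycle_setoid_swap_le_iff.2 hab) le_rfl)
  rw [cycleCount_eq_card_quotient, cycleCount_eq_card_quotient]
  exact Setoid.card_quotient_lt_of_le hle h hab

/-- Every component of the hypermap `(f, g)` has genus at least `0`. -/
def EulerBound (f g : Perm α) : Prop :=
  cycleCount f + cycleCount g + cycleCount (f * g) ≤ Fintype.card α + 2 * pairOrbitCount f g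

theorem eulerBound_one (f : Perm α) : EulerBound f 1 := by
  have hcycle : cycleCount (1 : Perm α) = Fintype.card α := by simp [cycleCount]
  have hpair : pairOrbitCount f 1 = cycleCount f := by
    rw [pairOrbitCount, sup_eq_left.2 (sameCycle_setoid_le_iff.2 fun x => Setoid.refl' _ x),
      cycleCount_eq_card_quotient]
  rw [EulerBound, hcycle, hpair, mul_one]
  omega

theorem EulerBound.swap_mul {f g : Perm α} {a b : α} (h : EulerBound (f * swap a b) g)
    (hg : ¬ g.SameCycle a b) : EulerBound f (swap a b * g) := by
  set s := swap a b
  set R := SameCycle.setoid f ⊔ SameCycle.setoid (s * g)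
  set R' := SameCycle.setoid (f * s) ⊔ SameCycle.setoid g
  have hRR' : R ≤ R' ⊔ SameCycle.setoid s := by
    refine sup_le ?_ ((sameCycle_setoid_mul_le s g).trans ?_)
    · simpa [s] using (sameCycle_setoid_mul_le (f * s) s).trans (sup_le_sup_right le_sup_left _)
    · exact sup_le le_sup_right (le_sup_right.trans le_sup_left)
  have hcard : Nat.card (Quotient R') ≤ Nat.card (Quotient R) + 1 :=
    (card_quotient_le_card_quotient_sup_swap_add_one R' a b).trans
      (Nat.add_le_add_right (Setoid.card_quotient_le_of_le hRR') 1)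
  have hgs : cycleCount (s * g) < cycleCount g := cycleCount_swap_mul_lt hg
  change _ ≤ _ + 2 * Nat.card (Quotient R') at h
  change _ ≤ _ + 2 * Nat.card (Quotient R)
  rw [mul_assoc] at h
  by_cases hab : R' a b
  · have hR : Nat.card (Quotient R') ≤ Nat.card (Quotient R) := Setoid.card_quotient_le_of_le
      (by rwa [sup_eq_left.2 (sameCycle_setoid_swap_le_iff.2 hab)] at hRR')
    have : cycleCount f ≤ cycleCount (f * s) + 1 := cycleCount_le_cycleCount_mul_swap_add_one f a b
    omega
  · have hf : cycleCount f < cycleCount (f * s) := by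
      simpa [s] using cycleCount_mul_swap_lt (f := f * s)
        fun h => hab (le_sup_left (a := SameCycle.setoid (f * s)) h)
    omega

theorem eulerBound (f g : Perm α) : EulerBound f g := by
  induction hn : #g.support using Nat.strong_induction_on generalizing f g with
  | _ n ih =>
  rcases eq_or_ne g 1 with rfl | hg
  · exact eulerBound_one f
  obtain ⟨a, ha⟩ := Finset.nonempty_iff_ne_empty.2 (mt support_eq_empty_iff.1 hg)
  have hga : g a ≠ a := mem_support.1 ha
  have hfix : ¬ (swap a (g a) * g).SameCycle a (g a) := fun h =>
    hga (h.eq_of_left (by simp [Function.IsFixedPt])).symm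
  simpa using (ih _ (hn ▸ card_support_swap_mul hga) (f * swap a (g a)) _ rfl).swap_mul hfix

end Equiv.Perm

theorem euler_char_le_two (E : ℕ) (σ τ : Equiv.Perm (Fin (2 * E)))
    (hτ : IsFpfInvolution τ) (htrans : IsTransitivePair σ τ) :
    (cycleCount σ : ℤ) - E + cycleCount (σ * τ) ≤ 2 := by
  have hEuler := Perm.eulerBound σ τ
  have hcard := Perm.card_le_two_mul_cycleCount hτ.1
  have hconn := Perm.pairOrbitCount_le_one htrans
  rw [Perm.EulerBound, Fintype.card_fin] at hEuler
  rw [Fintype.card_fin] at hcard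
  omega
end

section
/- Let σ be a permutation of a 2E-element set with V cycles and τ a fixed-point-free involution with E 2-cycles, and suppose ⟨σ, τ⟩ is transitive. If E ≥ 1 and F denotes the number of cycles of σ∘τ, then F ≥ 1 and V ≤ E + 1. -/
open Equiv Finset

/-!
Collapse each cycle of `σ` to a vertex and let every pair `{x, τ x}` join the cycles of its two
points. A word in `σ` and `τ` moves a point only along such edges (`σ` stays inside its cycle), so
transitivity makes this graph connected, and a connected graph has at most one more vertex than
it has edges. Since `τ` is a fixed-point-free involution there are only `E` pairs `{x, τ x}`.
-/

namespace Equiv.Perm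

variable {α : Type*}

lemma cycleCount_eq_card_cycleFactorsFinset_add [Fintype α] [DecidableEq α] (σ : Perm α) :
    cycleCount σ = #σ.cycleFactorsFinset + #σ.supportᶜ := by
  rw [cycleCount, cycleType_def, Multiset.card_map, card_compl]
  rfl

lemma cycleCount_eq_card_quotient_sameCycle [Fintype α] [DecidableEq α] (σ : Perm α) :
    cycleCount σ = Nat.card (Quotient (SameCycle.setoid σ)) := by
  have hne (c : σ.cycleFactorsFinset) : (c : Perm α).support.Nonempty :=
    (mem_cycleFactorsFinset_iff.mp c.2).1.nonempty_support
  choose p hp using hne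
  have hp_moved (c : σ.cycleFactorsFinset) : σ (p c) ≠ p c :=
    mem_support.mp (mem_cycleFactorsFinset_support_le c.2 (hp c))
  let φ : σ.cycleFactorsFinset ⊕ (σ.supportᶜ : Finset α) → Quotient (SameCycle.setoid σ) :=
    Sum.elim (fun c => ⟦p c⟧) (fun x => ⟦x⟧)
  have hφ : Function.Bijective φ := by
    constructor
    · rintro (c | ⟨x, hx⟩) (d | ⟨y, hy⟩) h <;> replace h : σ.SameCycle _ _ := Quotient.exact h
      · exact congrArg Sum.inl <| Subtype.ext <|
          (cycle_is_cycleOf (hp c) c.2).trans (h.cycleOf_eq.trans (cycle_is_cycleOf (hp d) d.2).symm)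
      · exact absurd (h.apply_eq_self_iff.mpr (notMem_support.mp (mem_compl.mp hy))) (hp_moved c)
      · exact absurd (h.apply_eq_self_iff.mp (notMem_support.mp (mem_compl.mp hx))) (hp_moved d)
      · obtain rfl : x = y := h.eq_of_left (notMem_support.mp (mem_compl.mp hx))
        rfl
    · rintro ⟨x⟩
      by_cases hx : σ x = x
      · exact ⟨.inr ⟨x, mem_compl.mpr (notMem_support.mpr hx)⟩, rfl⟩
      · let c : σ.cycleFactorsFinset :=
          ⟨σ.cycleOf x, cycleOf_mem_cycleFactorsFinset_iff.mpr (mem_support.mpr hx)⟩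
        exact ⟨.inl c, Quotient.sound (mem_support_cycleOf_iff.mp (hp c)).1.symm⟩
  rw [cycleCount_eq_card_cycleFactorsFinset_add, ← Nat.card_eq_finsetCard, ← Nat.card_eq_finsetCard,
    ← Nat.card_sum, Nat.card_congr (Equiv.ofBijective φ hφ)]

instance [Nonempty α] (σ : Perm α) : Nonempty (Quotient (SameCycle.setoid σ)) :=
  ⟨⟦Classical.ofNonempty⟧⟩

-- Loops and parallel edges of the multigraph are dropped; this only lowers the edge count.
def sameCycleGraph (σ τ : Perm α) : SimpleGraph (Quotient (SameCycle.setoid σ)) :=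
  SimpleGraph.fromEdgeSet (Set.range fun x => s(⟦x⟧, ⟦τ x⟧))

lemma sameCycleGraph_reachable_apply {σ τ g : Perm α}
    (hg : g ∈ Subgroup.closure ({σ, τ} : Set (Perm α))) (x : α) :
    (sameCycleGraph σ τ).Reachable ⟦x⟧ ⟦g x⟧ := by
  induction hg using Subgroup.closure_induction generalizing x with
  | mem g hg =>
    rcases hg with rfl | rfl
    · rw [Quotient.sound (SameCycle.refl g x).apply_right]
    · by_cases hx : (⟦x⟧ : Quotient (SameCycle.setoid σ)) = ⟦g x⟧
      · rw [hx]
      · exact SimpleGraph.Adj.reachable ((SimpleGraph.fromEdgeSet_adj _).mpr ⟨⟨x, rfl⟩, hx⟩)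
  | one => rfl
  | mul a b _ _ ha hb => exact (hb x).trans (ha (b x))
  | inv a _ ha => simpa using (ha (a⁻¹ x)).symm

end Equiv.Perm

open Equiv.Perm

variable {α : Type*}

lemma IsTransitivePair.connected_sameCycleGraph [Nonempty α] {σ τ : Perm α}
    (h : IsTransitivePair σ τ) : (sameCycleGraph σ τ).Connected where
  preconnected := by
    rintro ⟨x⟩ ⟨y⟩
    obtain ⟨g, hg, rfl⟩ := h x y
    exact sameCycleGraph_reachable_apply hg x

lemma IsFpfInvolution.two_mul_card_range_le [Finite α] {β : Type*} {τ : Perm α}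
    (hτ : IsFpfInvolution τ) {f : α → β} (hf : ∀ x, f (τ x) = f x) :
    2 * Nat.card (Set.range f) ≤ Nat.card α := by
  classical
  have := Fintype.ofFinite α
  rw [← Set.image_univ, ← coe_univ, ← coe_image, Nat.card_coe_set_eq, Set.ncard_coe_finset,
    Nat.card_eq_fintype_card, ← card_univ]
  refine mul_card_image_le_card _ _ fun b hb => ?_
  obtain ⟨x, -, rfl⟩ := mem_image.mp hb
  calc 2 = #{x, τ x} := (card_pair (hτ.2 x).symm).symm
    _ ≤ _ := card_le_card fun y hy => by
      rcases mem_insert.mp hy with rfl | hy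
      · simp
      · simp [mem_singleton.mp hy, hf]

lemma IsFpfInvolution.two_mul_card_edgeSet_sameCycleGraph_le [Finite α] {σ τ : Perm α}
    (hτ : IsFpfInvolution τ) : 2 * Nat.card (sameCycleGraph σ τ).edgeSet ≤ Nat.card α := by
  have hττ (x : α) : τ (τ x) = x := congrArg (· x) hτ.1
  have hsub : (sameCycleGraph σ τ).edgeSet ⊆ Set.range fun x => s(⟦x⟧, ⟦τ x⟧) := by
    rw [sameCycleGraph, SimpleGraph.edgeSet_fromEdgeSet]
    exact Set.sdiff_subset
  calc 2 * Nat.card (sameCycleGraph σ τ).edgeSet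
      ≤ 2 * Nat.card (Set.range fun x => (s(⟦x⟧, ⟦τ x⟧) : Sym2 (Quotient (SameCycle.setoid σ)))) :=
        Nat.mul_le_mul_left 2 (Nat.card_mono (Set.finite_range _) hsub)
    _ ≤ Nat.card α := hτ.two_mul_card_range_le fun x => by rw [hττ, Sym2.eq_swap]

theorem tree_bound (E : ℕ) (σ τ : Equiv.Perm (Fin (2 * E)))
    (hτ : IsFpfInvolution τ) (htrans : IsTransitivePair σ τ) (hE : 1 ≤ E) :
    1 ≤ cycleCount (σ * τ) ∧ cycleCount σ ≤ E + 1 := by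
  have : Nonempty (Fin (2 * E)) := ⟨⟨0, by omega⟩⟩
  refine ⟨?_, ?_⟩
  · rw [cycleCount_eq_card_quotient_sameCycle]
    exact Nat.card_pos
  · have hvertices := htrans.connected_sameCycleGraph.card_vert_le_card_edgeSet_add_one
    have hedges := hτ.two_mul_card_edgeSet_sameCycleGraph_le (σ := σ)
    rw [Nat.card_fin] at hedges
    rw [cycleCount_eq_card_quotient_sameCycle]
    omega
end
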